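/- Let G be a connected graph of order n ≥ 2 and k an integer with 1 ≤ k ≤ 𝔡(G). If 𝔡*(G) ≤ k + 1, then pd_k(G) = n, i.e., the only k-partition generator is the partition into singletons. -/
import Mathlib


open SimpleGraph Finset

/-- Distance from a vertex to a finite set of vertices:
`min_{w ∈ S} d(u, w)`. -/
noncomputable def setDist {V : Type*} (G : SimpleGraph V) (u : V) (S : Finset V) : ℕ :=
  sInf (G.dist u '' (S : Set V))

/-- The set `𝒟_G(x,y)` of vertices distinguishing `x` and `y`. -/
noncomputable def DG {V : Type*} (G : SimpleGraph V) [Fintype V] (x y : V) : Finset V :=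
  Finset.univ.filter fun z => G.dist z x ≠ G.dist z y

/-- `𝔡(G) = min_{x ≠ y} |𝒟_G(x,y)|`. -/
noncomputable def frakd {V : Type*} (G : SimpleGraph V) [Fintype V] : ℕ :=
  sInf {m | ∃ x y : V, x ≠ y ∧ (DG G x y).card = m}

/-- `𝔡*(G) = max_{x ≠ y} |𝒟_G(x,y)|`. -/
noncomputable def frakdStar {V : Type*} (G : SimpleGraph V) [Fintype V] : ℕ :=
  sSup {m | ∃ x y : V, x ≠ y ∧ (DG G x y).card = m}


section Aux

variable {V : Type*} (G : SimpleGraph V)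

lemma setDist_singleton (u z : V) : setDist G u {z} = G.dist u z := by
  simp [setDist]

lemma setDist_eq_zero_of_mem {u : V} {S : Finset V} (h : u ∈ S) : setDist G u S = 0 := by
  rw [setDist, Nat.sInf_eq_zero]
  exact Or.inl ⟨u, by simpa using h, SimpleGraph.dist_self⟩

lemma setDist_congr {x y : V} {S : Finset V}
    (h : ∀ z ∈ S, G.dist z x = G.dist z y) : setDist G x S = setDist G y S := by
  unfold setDist
  congr 1
  ext n
  simp only [Set.mem_image, Finset.mem_coe]
  constructor
  · rintro ⟨z, hz, rfl⟩
    exact ⟨z, hz, by rw [dist_comm (u := y) (v := z), ← h z hz, dist_comm]⟩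
  · rintro ⟨z, hz, rfl⟩
    exact ⟨z, hz, by rw [dist_comm (u := x) (v := z), h z hz, dist_comm]⟩

lemma mem_DG_left [Fintype V] (hG : G.Connected) {x y : V} (h : x ≠ y) : x ∈ DG G x y := by
  simp only [DG, Finset.mem_filter, Finset.mem_univ, true_and, SimpleGraph.dist_self]
  exact (hG.pos_dist_of_ne h).ne

lemma mem_DG_right [Fintype V] (hG : G.Connected) {x y : V} (h : x ≠ y) : y ∈ DG G x y := by
  simp only [DG, Finset.mem_filter, Finset.mem_univ, true_and, SimpleGraph.dist_self]
  exact (hG.pos_dist_of_ne h.symm).ne'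

end Aux

/-- A partition of the vertex set is a `k`-partition generator if every pair of
distinct vertices is distinguished by at least `k` parts. -/
noncomputable def IsKPartitionGenerator {V : Type*} (G : SimpleGraph V) [Fintype V]
    [DecidableEq V] (k : ℕ) (P : Finpartition (Finset.univ : Finset V)) : Prop :=
  ∀ u v : V, u ≠ v → k ≤ (P.parts.filter fun S => setDist G u S ≠ setDist G v S).card

/-- The `k`-partition dimension `pd_k(G)`. -/
noncomputable def pd {V : Type*} (G : SimpleGraph V) [Fintype V] [DecidableEq V] (k : ℕ) : ℕ :=
  sInf {m | ∃ P : Finpartition (Finset.univ : Finset V),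
    IsKPartitionGenerator G k P ∧ P.parts.card = m}

/-- A set of vertices is a `k`-metric generator if every pair of distinct
vertices is distinguished by at least `k` of its vertices. -/
def IsKMetricGenerator {V : Type*} (G : SimpleGraph V) [Fintype V] (k : ℕ) (W : Finset V) : Prop :=
  ∀ u v : V, u ≠ v → k ≤ (W.filter fun z => G.dist z u ≠ G.dist z v).card

/-- The `k`-metric dimension `dim_k(G)`. -/
noncomputable def metricDim {V : Type*} (G : SimpleGraph V) [Fintype V] (k : ℕ) : ℕ :=
  sInf {m | ∃ W : Finset V, IsKMetricGenerator G k W ∧ W.card = m}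

theorem stmt_15 {V : Type*} [Fintype V] [DecidableEq V] (G : SimpleGraph V)
    (hG : G.Connected) (hn : 2 ≤ Fintype.card V)
    (k : ℕ) (hk : 1 ≤ k) (hk' : k ≤ frakd G) (hstar : frakdStar G ≤ k + 1) :
    pd G k = Fintype.card V := by
  classical
  -- upper bound on |DG x y|
  have hD_le : ∀ x y : V, x ≠ y → (DG G x y).card ≤ k + 1 := by
    intro x y hxy
    refine le_trans ?_ hstar
    unfold frakdStar
    have hb : BddAbove {m | ∃ x y : V, x ≠ y ∧ (DG G x y).card = m} := by
      refine ⟨Fintype.card V, ?_⟩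
      rintro m ⟨a, b, -, rfl⟩
      exact Finset.card_le_univ _
    exact le_csSup hb ⟨x, y, hxy, rfl⟩
  -- the discrete partition is a k-partition generator
  have hbot : IsKPartitionGenerator G k (⊥ : Finpartition (Finset.univ : Finset V)) := by
    intro u v huv
    have hcard : ((⊥ : Finpartition (Finset.univ : Finset V)).parts.filter
        fun S => setDist G u S ≠ setDist G v S).card = (DG G u v).card := by
      rw [Finpartition.parts_bot, Finset.filter_map, Finset.card_map]
      unfold DG
      congr 1
      apply Finset.filter_congr
      intro z _
      simp only [Function.comp, Function.Embedding.coeFn_mk, setDist_singleton]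
      rw [dist_comm (u := u) (v := z), dist_comm (u := v) (v := z)]
    rw [hcard]
    exact le_trans hk' (Nat.sInf_le ⟨u, v, huv, rfl⟩)
  -- every k-partition generator has all parts singletons
  have hall : ∀ P : Finpartition (Finset.univ : Finset V), IsKPartitionGenerator G k P →
      P.parts.card = Fintype.card V := by
    intro P hP
    have hsing : ∀ S ∈ P.parts, S.card = 1 := by
      intro S hS
      by_contra hne1
      have hne : S.Nonempty := P.nonempty_of_mem_parts hS
      have h1lt : 1 < S.card := lt_of_le_of_ne (Finset.Nonempty.card_pos hne) (Ne.symm hne1)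
      obtain ⟨x, hxS, y, hyS, hxy⟩ := Finset.one_lt_card.mp h1lt
      have hSd : setDist G x S = setDist G y S := by
        rw [setDist_eq_zero_of_mem G hxS, setDist_eq_zero_of_mem G hyS]
      set F := P.parts.filter (fun T => setDist G x T ≠ setDist G y T) with hF
      have hkF : k ≤ F.card := hP x y hxy
      set D2 := ((DG G x y).erase x).erase y with hD2
      have hwit : ∀ T ∈ F, (T ∩ D2).Nonempty := by
        intro T hT
        rw [hF, Finset.mem_filter] at hT
        obtain ⟨hTp, hTd⟩ := hT
        have hTS : T ≠ S := fun h => hTd (h ▸ hSd)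
        have hdisj : Disjoint T S := P.disjoint hTp hS hTS
        obtain ⟨z, hzT, hz⟩ : ∃ z ∈ T, G.dist z x ≠ G.dist z y := by
          by_contra h
          push_neg at h
          exact hTd (setDist_congr G h)
        refine ⟨z, Finset.mem_inter.mpr ⟨hzT, ?_⟩⟩
        have hzx : z ≠ x := fun h => (Finset.disjoint_left.mp hdisj hzT) (h ▸ hxS)
        have hzy : z ≠ y := fun h => (Finset.disjoint_left.mp hdisj hzT) (h ▸ hyS)
        simp only [hD2, Finset.mem_erase]
        exact ⟨hzy, hzx, by simp [DG, hz]⟩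
      have hcard : F.card ≤ D2.card := by
        set f : Finset V → V := fun T =>
          if h : (T ∩ D2).Nonempty then h.choose else x with hf
        refine Finset.card_le_card_of_injOn f ?_ ?_
        · intro T hT
          have h := hwit T hT
          simp only [hf, dif_pos h]
          exact (Finset.mem_inter.mp h.choose_spec).2
        · intro T1 h1 T2 h2 heq
          rw [Finset.mem_coe] at h1 h2
          by_contra hne'
          have w1 := hwit T1 h1
          have w2 := hwit T2 h2
          have hz1 : f T1 ∈ T1 := by
            simp only [hf, dif_pos w1]; exact (Finset.mem_inter.mp w1.choose_spec).1
          have hz2 : f T2 ∈ T2 := by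
            simp only [hf, dif_pos w2]; exact (Finset.mem_inter.mp w2.choose_spec).1
          have hT1p : T1 ∈ P.parts := (Finset.mem_filter.mp h1).1
          have hT2p : T2 ∈ P.parts := (Finset.mem_filter.mp h2).1
          exact (Finset.disjoint_left.mp (P.disjoint hT1p hT2p hne') hz1) (heq ▸ hz2)
      have hyD : y ∈ (DG G x y).erase x :=
        Finset.mem_erase.mpr ⟨hxy.symm, mem_DG_right G hG hxy⟩
      have hDcard : D2.card = (DG G x y).card - 2 := by
        rw [hD2, Finset.card_erase_of_mem hyD,
          Finset.card_erase_of_mem (mem_DG_left G hG hxy)]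
        omega
      have := hD_le x y hxy
      omega
    calc P.parts.card = ∑ S ∈ P.parts, 1 := Finset.card_eq_sum_ones _
      _ = ∑ S ∈ P.parts, S.card := Finset.sum_congr rfl (fun S hS => (hsing S hS).symm)
      _ = (Finset.univ : Finset V).card := P.sum_card_parts
      _ = Fintype.card V := Finset.card_univ
  have hmem : Fintype.card V ∈ {m | ∃ P : Finpartition (Finset.univ : Finset V),
      IsKPartitionGenerator G k P ∧ P.parts.card = m} :=
    ⟨⊥, hbot, by rw [Finpartition.card_bot, Finset.card_univ]⟩
  have hsInf := Nat.sInf_mem (⟨_, hmem⟩ : Set.Nonempty _)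
  obtain ⟨P, hP, hPc⟩ := hsInf
  rw [pd, ← hPc, hall P hP]
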